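/- The unique continuous solution Υ of Υ(τ) = e^{-τ} + (ω/2)∫_0^κ Υ(τ')E₁(|τ-τ'|)dτ' with 0 ≤ ω < 1 satisfies Υ(τ) ≥ e^{-τ} > 0 for all τ ∈ [0, κ], i.e., scattering only increases the total intensity above the Lambert–Beer prediction. -/

import Mathlib

/-!
Tonelli gives `∫_0^∞ E₁ = ∫_1^∞ t⁻² dt = 1`, so the kernel `(ω/2) E₁(|τ - τ'|)` has total mass at
most `ω < 1` in `τ'`. If `Υ` attained a negative minimum `m` on `[0, κ]`, the equation at the
minimiser would give `m ≥ e^{-τ₀} + ω m > ω m`, which is impossible. Hence `Υ ≥ 0`, the integral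
term is nonnegative, and `Υ ≥ e^{-τ}`.
-/

open MeasureTheory Set Real

noncomputable def expIntegralE1 (x : ℝ) : ℝ := ∫ t in Ioi (1 : ℝ), exp (-x * t) / t

lemma expIntegralE1_nonneg (x : ℝ) : 0 ≤ expIntegralE1 x :=
  setIntegral_nonneg measurableSet_Ioi fun _ ht =>
    div_nonneg (exp_pos _).le (zero_lt_one.trans ht).le

lemma measurable_expIntegralE1 : Measurable expIntegralE1 :=
  (Measurable.stronglyMeasurable (by fun_prop :
    Measurable fun p : ℝ × ℝ => exp (-p.1 * p.2) / p.2)).integral_prod_right'.measurable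

lemma lintegral_enorm_exp_neg_mul_div {t : ℝ} (ht : 0 < t) :
    ∫⁻ x in Ioi 0, ‖exp (-x * t) / t‖ₑ = ENNReal.ofReal (t ^ (-2 : ℝ)) := by
  have heq (x : ℝ) : exp (-x * t) / t = t⁻¹ * exp (-t * x) := by ring_nf
  have hint : IntegrableOn (fun x => t⁻¹ * exp (-t * x)) (Ioi 0) :=
    (integrableOn_exp_mul_Ioi (neg_lt_zero.2 ht) 0).const_mul _
  simp_rw [heq]
  rw [← ofReal_integral_norm_eq_lintegral_enorm hint]
  congr 1
  rw [setIntegral_congr_fun measurableSet_Ioi fun x _ => Real.norm_of_nonneg (by positivity),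
    integral_const_mul, integral_exp_mul_Ioi (neg_lt_zero.2 ht), rpow_neg ht.le]
  field_simp
  simp

lemma lintegral_enorm_expIntegralE1_le : ∫⁻ x in Ioi 0, ‖expIntegralE1 x‖ₑ ≤ 1 := by
  calc ∫⁻ x in Ioi 0, ‖expIntegralE1 x‖ₑ
      ≤ ∫⁻ x in Ioi 0, ∫⁻ t in Ioi 1, ‖exp (-x * t) / t‖ₑ :=
        lintegral_mono fun x => enorm_integral_le_lintegral_enorm _
    _ = ∫⁻ t in Ioi 1, ∫⁻ x in Ioi 0, ‖exp (-x * t) / t‖ₑ :=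
        lintegral_lintegral_swap (by fun_prop)
    _ = ∫⁻ t in Ioi 1, ENNReal.ofReal (t ^ (-2 : ℝ)) :=
        setLIntegral_congr_fun measurableSet_Ioi fun t ht =>
          lintegral_enorm_exp_neg_mul_div (zero_lt_one.trans ht)
    _ = ENNReal.ofReal (∫ t in Ioi 1, t ^ (-2 : ℝ)) :=
        (ofReal_integral_eq_lintegral_ofReal
          (integrableOn_Ioi_rpow_of_lt (by norm_num) one_pos)
          ((ae_restrict_mem measurableSet_Ioi).mono fun t ht =>
            rpow_nonneg (zero_lt_one.trans ht).le _)).symm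
    _ = 1 := by
        rw [integral_Ioi_rpow_of_lt (by norm_num) one_pos]
        norm_num

lemma integrableOn_expIntegralE1 : IntegrableOn expIntegralE1 (Ioi 0) :=
  ⟨measurable_expIntegralE1.aestronglyMeasurable,
    lintegral_enorm_expIntegralE1_le.trans_lt ENNReal.one_lt_top⟩

lemma setIntegral_expIntegralE1_le : ∫ x in Ioi 0, expIntegralE1 x ≤ 1 := by
  have h := lintegral_enorm_expIntegralE1_le
  rw [← ofReal_integral_norm_eq_lintegral_enorm integrableOn_expIntegralE1] at h
  simp_rw [Real.norm_of_nonneg (expIntegralE1_nonneg _)] at h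
  exact ENNReal.ofReal_le_one.1 h

theorem integrable_comp_abs {E : Type*} [NormedAddCommGroup E] {f : ℝ → E}
    (hf : IntegrableOn f (Ioi 0)) : Integrable fun x => f |x| := by
  have hpos : IntegrableOn (fun x => f |x|) (Ioi 0) :=
    hf.congr_fun (fun x hx => by rw [abs_of_pos hx]) measurableSet_Ioi
  have hneg : IntegrableOn (fun x => f |x|) (Iic 0) := by
    rw [← Measure.map_neg_eq_self (volume : Measure ℝ),
      measurableEmbedding_neg.integrableOn_map_iff]
    simpa [Function.comp_def, neg_preimage] using
      (integrableOn_Ici_iff_integrableOn_Ioi).mpr hpos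
  simpa using hneg.union hpos

lemma integrable_expIntegralE1_abs_sub (τ : ℝ) :
    Integrable fun y => expIntegralE1 |τ - y| := by
  simpa only [sub_eq_add_neg] using
    ((integrable_comp_abs integrableOn_expIntegralE1).comp_add_left τ).comp_neg

lemma integral_expIntegralE1_abs_sub_le (τ a b : ℝ) :
    ∫ y in a..b, expIntegralE1 |τ - y| ≤ 2 := by
  calc ∫ y in a..b, expIntegralE1 |τ - y|
      ≤ ‖∫ y in a..b, expIntegralE1 |τ - y|‖ := le_norm_self _
    _ = ‖∫ y in uIoc a b, expIntegralE1 |τ - y|‖ :=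
        intervalIntegral.norm_integral_eq_norm_integral_uIoc _
    _ = ∫ y in uIoc a b, expIntegralE1 |τ - y| :=
        Real.norm_of_nonneg (setIntegral_nonneg measurableSet_uIoc fun _ _ =>
          expIntegralE1_nonneg _)
    _ ≤ ∫ y, expIntegralE1 |τ - y| :=
        setIntegral_le_integral (integrable_expIntegralE1_abs_sub τ)
          (.of_forall fun _ => expIntegralE1_nonneg _)
    _ = ∫ x, expIntegralE1 |x| := integral_sub_left_eq_self (fun x => expIntegralE1 |x|) _ τ
    _ = 2 * ∫ x in Ioi 0, expIntegralE1 x := integral_comp_abs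
    _ ≤ 2 := by linarith [setIntegral_expIntegralE1_le]

theorem le_of_eq_add_integral_mul {a b c : ℝ} {f Υ : ℝ → ℝ} {k : ℝ → ℝ → ℝ} (hc : c < 1)
    (hf : ∀ x ∈ Icc a b, 0 ≤ f x) (hΥc : ContinuousOn Υ (Icc a b))
    (hk : ∀ x ∈ Icc a b, ∀ y ∈ Icc a b, 0 ≤ k x y)
    (hki : ∀ x ∈ Icc a b, IntervalIntegrable (k x) volume a b)
    (hkc : ∀ x ∈ Icc a b, ∫ y in a..b, k x y ≤ c)
    (hΥ : ∀ x ∈ Icc a b, Υ x = f x + ∫ y in a..b, Υ y * k x y) :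
    ∀ x ∈ Icc a b, f x ≤ Υ x := by
  intro x hx
  have hab : a ≤ b := hx.1.trans hx.2
  obtain ⟨x₀, hx₀, hmin⟩ := isCompact_Icc.exists_isMinOn ⟨x, hx⟩ hΥc
  have hmin_nonneg : 0 ≤ Υ x₀ := by
    by_contra! hneg
    have hlow : Υ x₀ * c ≤ ∫ y in a..b, Υ y * k x₀ y :=
      calc Υ x₀ * c
          ≤ Υ x₀ * ∫ y in a..b, k x₀ y := mul_le_mul_of_nonpos_left (hkc x₀ hx₀) hneg.le
        _ = ∫ y in a..b, Υ x₀ * k x₀ y := (intervalIntegral.integral_const_mul _ _).symm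
        _ ≤ ∫ y in a..b, Υ y * k x₀ y :=
          intervalIntegral.integral_mono_on hab ((hki x₀ hx₀).const_mul _)
            ((hki x₀ hx₀).continuousOn_mul (by rwa [uIcc_of_le hab]))
            fun y hy => mul_le_mul_of_nonneg_right (hmin hy) (hk x₀ hx₀ y hy)
    nlinarith [hΥ x₀ hx₀, hf x₀ hx₀]
  have hI : 0 ≤ ∫ y in a..b, Υ y * k x y :=
    intervalIntegral.integral_nonneg hab fun y hy =>
      mul_nonneg (hmin_nonneg.trans (hmin hy)) (hk x hx y hy)
  linarith [hΥ x hx]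

theorem stmt_7_general (ω κ : ℝ) (hω0 : 0 ≤ ω) (hω1 : ω < 1)
    (E₁ : ℝ → ℝ) (hE : E₁ = fun x => ∫ t in Set.Ioi (1:ℝ), Real.exp (-x * t) / t)
    (Υ : ℝ → ℝ) (hΥc : ContinuousOn Υ (Set.Icc 0 κ))
    (hΥ : ∀ τ ∈ Set.Icc (0:ℝ) κ,
      Υ τ = Real.exp (-τ) + ω/2 * ∫ τ' in (0:ℝ)..κ, Υ τ' * E₁ (abs (τ - τ'))) :
    ∀ τ ∈ Set.Icc (0:ℝ) κ, Real.exp (-τ) ≤ Υ τ ∧ 0 < Real.exp (-τ) := by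
  obtain rfl : E₁ = expIntegralE1 := hE
  have hΥ' : ∀ τ ∈ Icc 0 κ, Υ τ = exp (-τ) +
      ∫ τ' in (0:ℝ)..κ, Υ τ' * (ω / 2 * expIntegralE1 |τ - τ'|) := fun τ hτ => by
    simp_rw [mul_left_comm _ (ω / 2), intervalIntegral.integral_const_mul]
    exact hΥ τ hτ
  have hmass (τ : ℝ) : ∫ τ' in (0:ℝ)..κ, ω / 2 * expIntegralE1 |τ - τ'| ≤ ω := by
    rw [intervalIntegral.integral_const_mul]
    nlinarith [integral_expIntegralE1_abs_sub_le τ 0 κ]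
  intro τ hτ
  refine ⟨le_of_eq_add_integral_mul hω1 (fun _ _ => (exp_pos _).le) hΥc
    (fun _ _ _ _ => mul_nonneg (by positivity) (expIntegralE1_nonneg _))
    (fun x _ => (integrable_expIntegralE1_abs_sub x).intervalIntegrable.const_mul _)
    (fun x _ => hmass x) hΥ' τ hτ, exp_pos _⟩

/-- Any continuous solution of the Fredholm equation
`Υ(τ) = e^{-τ} + (ω/2)∫_0^κ Υ(τ')E₁(|τ-τ'|)dτ'` with `0 ≤ ω < 1` satisfies
`Υ(τ) ≥ e^{-τ} > 0` on `[0,κ]`: scattering only increases the intensity above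
the Lambert–Beer prediction. -/
theorem stmt_7 (ω κ : ℝ) (hω0 : 0 ≤ ω) (hω1 : ω < 1) (hκ : 0 < κ)
    (E₁ : ℝ → ℝ) (hE : E₁ = fun x => ∫ t in Set.Ioi (1:ℝ), Real.exp (-x * t) / t)
    (Υ : ℝ → ℝ) (hΥc : ContinuousOn Υ (Set.Icc 0 κ))
    (hΥ : ∀ τ ∈ Set.Icc (0:ℝ) κ,
      Υ τ = Real.exp (-τ) + ω/2 * ∫ τ' in (0:ℝ)..κ, Υ τ' * E₁ (abs (τ - τ'))) :
    ∀ τ ∈ Set.Icc (0:ℝ) κ, Real.exp (-τ) ≤ Υ τ ∧ 0 < Real.exp (-τ) :=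
  stmt_7_general ω κ hω0 hω1 E₁ hE Υ hΥc hΥ
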